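/- arXiv:1801.09811 — 6 statements merged into one kernel-verified Lean document; each statement's English description precedes it below -/
import Mathlib

section
/- Let S be the swap matrix on ℂ^n ⊗ ℂ^n (entries S (i,j) (k,l) = 1 if i = l and j = k, else 0), let θ be real, and set U = (cos θ) • 1 + (i · sin θ) • S. Then for all n×n complex matrices A, B, C, D: trace((C ⊗ₖ D) * U * (A ⊗ₖ B) * Uᴴ) = (cos θ)^2 · trace(C*A) · trace(D*B) + (sin θ)^2 · trace(C*B) · trace(D*A) + i · cos θ · sin θ · (trace(A*C*B*D) − trace(C*A*D*B)). -/
open scoped Matrix Kronecker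

/-- The swap matrix on `ℂ^n ⊗ ℂ^n`. -/
def swapMatrix (n : ℕ) : Matrix (Fin n × Fin n) (Fin n × Fin n) ℂ :=
  fun p q => if p.1 = q.2 ∧ p.2 = q.1 then 1 else 0

section Aux

variable {n : ℕ}

lemma swap_conjT : (swapMatrix n)ᴴ = swapMatrix n := by
  ext p q
  simp only [Matrix.conjTranspose_apply, swapMatrix, apply_ite (star : ℂ → ℂ), star_one, star_zero]
  congr 1
  exact propext ⟨fun ⟨h1,h2⟩ => ⟨h2.symm, h1.symm⟩, fun ⟨h1,h2⟩ => ⟨h2.symm, h1.symm⟩⟩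

lemma kron_mul_swap (A B : Matrix (Fin n) (Fin n) ℂ) :
    (A ⊗ₖ B) * swapMatrix n = swapMatrix n * (B ⊗ₖ A) := by
  ext ⟨i,j⟩ ⟨k,l⟩
  rw [Matrix.mul_apply, Matrix.mul_apply]
  simp [swapMatrix, Fintype.sum_prod_type, mul_comm, ite_and]

lemma swap_mul_swap : swapMatrix n * swapMatrix n = 1 := by
  ext ⟨i,j⟩ ⟨k,l⟩
  rw [Matrix.mul_apply]
  simp [swapMatrix, Fintype.sum_prod_type, ite_and, Matrix.one_apply, Prod.ext_iff, and_comm]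

lemma trace_kron_mul_swap (X Y : Matrix (Fin n) (Fin n) ℂ) :
    Matrix.trace ((X ⊗ₖ Y) * swapMatrix n) = Matrix.trace (X * Y) := by
  rw [Matrix.trace, Matrix.trace]
  simp [Matrix.mul_apply, Fintype.sum_prod_type, swapMatrix, ite_and, Matrix.diag]

end Aux

/-- All two-party expectation values of a product state evolved by the partial swap
`U = cos θ • 1 + (i sin θ) • S`. -/
theorem partial_swap_expectation {n : ℕ} (θ : ℝ)
    (U : Matrix (Fin n × Fin n) (Fin n × Fin n) ℂ)
    (hU : U = (Real.cos θ : ℂ) • (1 : Matrix (Fin n × Fin n) (Fin n × Fin n) ℂ)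
        + (Complex.I * (Real.sin θ : ℂ)) • swapMatrix n)
    (A B C D : Matrix (Fin n) (Fin n) ℂ) :
    Matrix.trace ((C ⊗ₖ D) * U * (A ⊗ₖ B) * Uᴴ) =
      (Real.cos θ : ℂ) ^ 2 * Matrix.trace (C * A) * Matrix.trace (D * B)
        + (Real.sin θ : ℂ) ^ 2 * Matrix.trace (C * B) * Matrix.trace (D * A)
        + Complex.I * (Real.cos θ : ℂ) * (Real.sin θ : ℂ) *
            (Matrix.trace (A * C * B * D) - Matrix.trace (C * A * D * B)) := by
  subst hU
  have t1 : Matrix.trace ((C ⊗ₖ D) * (A ⊗ₖ B)) = Matrix.trace (C*A) * Matrix.trace (D*B) := by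
    rw [← Matrix.mul_kronecker_mul, Matrix.trace_kronecker]
  have t2 : Matrix.trace ((C ⊗ₖ D) * (A ⊗ₖ B) * swapMatrix n) = Matrix.trace (C*A*D*B) := by
    rw [← Matrix.mul_kronecker_mul, trace_kron_mul_swap]; simp [Matrix.mul_assoc]
  have t3 : Matrix.trace ((C ⊗ₖ D) * swapMatrix n * (A ⊗ₖ B)) = Matrix.trace (A*C*B*D) := by
    rw [kron_mul_swap, Matrix.mul_assoc, Matrix.trace_mul_comm, ← Matrix.mul_kronecker_mul,
      trace_kron_mul_swap, Matrix.mul_assoc D, Matrix.trace_mul_comm D]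
    simp [Matrix.mul_assoc]
  have t4 : Matrix.trace ((C ⊗ₖ D) * swapMatrix n * (A ⊗ₖ B) * swapMatrix n)
      = Matrix.trace (C*B) * Matrix.trace (D*A) := by
    rw [kron_mul_swap, Matrix.trace_mul_comm, ← Matrix.mul_assoc, ← Matrix.mul_assoc,
      swap_mul_swap, one_mul, ← Matrix.mul_kronecker_mul, Matrix.trace_kronecker, mul_comm]
  simp only [Matrix.conjTranspose_add, Matrix.conjTranspose_smul, Matrix.conjTranspose_one,
    swap_conjT, star_mul', Complex.star_def, Complex.conj_I, Complex.conj_ofReal,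
    mul_add, add_mul, Matrix.mul_smul, Matrix.smul_mul, Matrix.mul_one, Matrix.one_mul,
    smul_smul, Matrix.trace_add, Matrix.trace_smul, smul_eq_mul]
  rw [t1, t2, t3, t4]
  ring_nf
  simp only [Complex.I_sq]
  ring
end

section
/- Fix a real θ and n ≥ 1, and define Λ(X) = (cos θ)^2 • X + ((sin θ)^2 / n) · trace(X) • 1 on n×n complex matrices. Let ρ and σ be Hermitian n×n complex matrices with trace(ρ) = trace(σ). Then the sum over i of |eigenvalues of (Λ(ρ) − Λ(σ))| equals (cos θ)^2 times the sum over i of |eigenvalues of (ρ − σ)|, where eigenvalues are taken via Matrix.IsHermitian.eigenvalues (Λ(ρ) − Λ(σ) = cos²θ • (ρ − σ) is Hermitian). -/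
/-!
The trace terms cancel on inputs of equal trace, so `Λ ρ - Λ σ = cos²θ • (ρ - σ)`. Scaling a
Hermitian matrix by `r` scales the multiset of its eigenvalues by `r`: both are the roots of the
characteristic polynomial, which is read off from the unitary diagonalisation.
-/

open scoped Matrix

open Polynomial Unitary

namespace Matrix

variable {𝕜 n : Type*} [RCLike 𝕜] [Fintype n] [DecidableEq n]

theorem charpoly_conjStarAlgAut (U : unitaryGroup n 𝕜) (M : Matrix n n 𝕜) :
    (conjStarAlgAut 𝕜 _ U M).charpoly = M.charpoly := by
  rw [conjStarAlgAut_apply, charpoly_mul_comm, ← mul_assoc]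
  simp

theorem IsHermitian.eigenvalues_map_eq_of_eq_conj_diagonal {B : Matrix n n 𝕜}
    (hB : B.IsHermitian) (U : unitaryGroup n 𝕜) (d : n → ℝ)
    (h : B = conjStarAlgAut 𝕜 _ U (diagonal (RCLike.ofReal ∘ d))) :
    Finset.univ.val.map hB.eigenvalues = Finset.univ.val.map d := by
  have hroots := hB.roots_charpoly_eq_eigenvalues
  subst h
  rw [charpoly_conjStarAlgAut, charpoly_diagonal,
    roots_prod _ _ (Finset.prod_ne_zero_iff.mpr fun i _ => X_sub_C_ne_zero _)] at hroots
  simpa [Multiset.map_map, Function.comp_def] using congrArg (Multiset.map RCLike.re) hroots.symm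

theorem IsHermitian.eigenvalues_map_smul {A : Matrix n n 𝕜} (hA : A.IsHermitian) (r : ℝ)
    (hrA : (r • A).IsHermitian) :
    Finset.univ.val.map hrA.eigenvalues = Finset.univ.val.map (r • hA.eigenvalues) := by
  refine hrA.eigenvalues_map_eq_of_eq_conj_diagonal hA.eigenvectorUnitary _ ?_
  conv_lhs => rw [hA.spectral_theorem, RCLike.real_smul_eq_coe_smul (K := 𝕜)]
  rw [← map_smul, ← diagonal_smul]
  congr 2
  ext i
  simp

theorem IsHermitian.sum_abs_eigenvalues_smul {A : Matrix n n 𝕜} (hA : A.IsHermitian) {r : ℝ}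
    (hr : 0 ≤ r) (hrA : (r • A).IsHermitian) :
    ∑ i, |hrA.eigenvalues i| = r * ∑ i, |hA.eigenvalues i| := by
  have h := congrArg (fun s => (s.map abs).sum) (hA.eigenvalues_map_smul r hrA)
  simp only [Multiset.map_map] at h
  change ∑ i, |hrA.eigenvalues i| = ∑ i, |r * hA.eigenvalues i| at h
  simp [h, Finset.mul_sum, abs_mul, abs_of_nonneg hr]

end Matrix

theorem depolarising_trace_distance_general {n : ℕ} (θ : ℝ)
    (Λ : Matrix (Fin n) (Fin n) ℂ → Matrix (Fin n) (Fin n) ℂ)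
    (hΛ : ∀ X, Λ X = (Real.cos θ) ^ 2 • X
        + (((Real.sin θ : ℂ) ^ 2 / n) * Matrix.trace X) • (1 : Matrix (Fin n) (Fin n) ℂ))
    (ρ σ : Matrix (Fin n) (Fin n) ℂ)
    (htr : Matrix.trace ρ = Matrix.trace σ)
    (h1 : (Λ ρ - Λ σ).IsHermitian) (h2 : (ρ - σ).IsHermitian) :
    ∑ i, |h1.eigenvalues i| = (Real.cos θ) ^ 2 * ∑ i, |h2.eigenvalues i| := by
  have hdiff : Λ ρ - Λ σ = Real.cos θ ^ 2 • (ρ - σ) := by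
    rw [hΛ ρ, hΛ σ, htr, smul_sub]
    abel
  revert h1
  rw [hdiff]
  exact h2.sum_abs_eigenvalues_smul (sq_nonneg _)

/-- The trace norm (sum of absolute eigenvalues) of the difference of the outputs of the
depolarising channel `Λ(X) = cos²θ • X + (sin²θ/n)·tr(X) • 1` on two equal-trace Hermitian
states shrinks by exactly `cos²θ`. -/
theorem depolarising_trace_distance {n : ℕ} (hn : 1 ≤ n) (θ : ℝ)
    (Λ : Matrix (Fin n) (Fin n) ℂ → Matrix (Fin n) (Fin n) ℂ)
    (hΛ : ∀ X, Λ X = (Real.cos θ) ^ 2 • X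
        + (((Real.sin θ : ℂ) ^ 2 / n) * Matrix.trace X) • (1 : Matrix (Fin n) (Fin n) ℂ))
    (ρ σ : Matrix (Fin n) (Fin n) ℂ)
    (hρ : ρ.IsHermitian) (hσ : σ.IsHermitian)
    (htr : Matrix.trace ρ = Matrix.trace σ)
    (h1 : (Λ ρ - Λ σ).IsHermitian) (h2 : (ρ - σ).IsHermitian) :
    ∑ i, |h1.eigenvalues i| = (Real.cos θ) ^ 2 * ∑ i, |h2.eigenvalues i| :=
  depolarising_trace_distance_general θ Λ hΛ ρ σ htr h1 h2
end

section
/- Let S be the swap matrix on ℂ² ⊗ ℂ² (entries S (i,j) (k,l) = 1 if i = l and j = k, else 0), let θ be real, set U = (cos θ) • 1 + (i · sin θ) • S, and let σz = !![1, 0; 0, −1]. Then for every 2×2 complex matrix ρ: trace((1 ⊗ₖ σz) * U * (ρ ⊗ₖ ((1/2) • 1)) * Uᴴ) = (sin θ)^2 · trace(σz * ρ). Consequently, if sin θ ≠ 0, the values for ρ = !![1,0;0,0] and ρ = !![0,0;0,1] differ. -/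
open scoped Matrix Kronecker

/-- After a partial swap of two qubits with a maximally mixed environment, the environment
retains the information `tr(σz ρ)` about the earlier system state: the expectation of
`𝟙 ⊗ σz` equals `sin²θ · tr(σz ρ)`, and hence (for `sin θ ≠ 0`) distinguishes the system
states `|0⟩⟨0|` and `|1⟩⟨1|`. -/
theorem partial_swap_env_memory (θ : ℝ)
    (U : Matrix (Fin 2 × Fin 2) (Fin 2 × Fin 2) ℂ)
    (hU : U = (Real.cos θ : ℂ) • (1 : Matrix (Fin 2 × Fin 2) (Fin 2 × Fin 2) ℂ)
        + (Complex.I * (Real.sin θ : ℂ)) • swapMatrix 2)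
    (σz : Matrix (Fin 2) (Fin 2) ℂ) (hσz : σz = !![1, 0; 0, -1]) :
    (∀ ρ : Matrix (Fin 2) (Fin 2) ℂ,
      Matrix.trace (((1 : Matrix (Fin 2) (Fin 2) ℂ) ⊗ₖ σz) * U *
          (ρ ⊗ₖ (((1 : ℂ) / 2) • (1 : Matrix (Fin 2) (Fin 2) ℂ))) * Uᴴ) =
        (Real.sin θ : ℂ) ^ 2 * Matrix.trace (σz * ρ)) ∧
    (Real.sin θ ≠ 0 →
      Matrix.trace (((1 : Matrix (Fin 2) (Fin 2) ℂ) ⊗ₖ σz) * U *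
          ((!![1, 0; 0, 0] : Matrix (Fin 2) (Fin 2) ℂ) ⊗ₖ
            (((1 : ℂ) / 2) • (1 : Matrix (Fin 2) (Fin 2) ℂ))) * Uᴴ) ≠
      Matrix.trace (((1 : Matrix (Fin 2) (Fin 2) ℂ) ⊗ₖ σz) * U *
          ((!![0, 0; 0, 1] : Matrix (Fin 2) (Fin 2) ℂ) ⊗ₖ
            (((1 : ℂ) / 2) • (1 : Matrix (Fin 2) (Fin 2) ℂ))) * Uᴴ)) := by
  have key : ∀ ρ : Matrix (Fin 2) (Fin 2) ℂ,
      Matrix.trace (((1 : Matrix (Fin 2) (Fin 2) ℂ) ⊗ₖ σz) * U *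
          (ρ ⊗ₖ (((1 : ℂ) / 2) • (1 : Matrix (Fin 2) (Fin 2) ℂ))) * Uᴴ) =
        (Real.sin θ : ℂ) ^ 2 * Matrix.trace (σz * ρ) := by
    intro ρ
    subst hU hσz
    simp only [Matrix.trace, Matrix.diag, Matrix.mul_apply, Matrix.conjTranspose_apply,
      Matrix.add_apply, Matrix.smul_apply, Matrix.one_apply, Matrix.kroneckerMap_apply,
      swapMatrix, Fintype.sum_prod_type, Fin.sum_univ_two, Matrix.cons_val', Matrix.cons_val_zero,
      Matrix.cons_val_one, Matrix.head_cons, Matrix.head_fin_const, Matrix.empty_val',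
      Matrix.cons_val_fin_one, smul_eq_mul, map_add, map_mul, map_one, Complex.conj_I,
      Complex.conj_ofReal, Prod.mk.injEq]
    norm_num [Fin.ext_iff]
    simp only [← Complex.ofReal_sin, ← Complex.ofReal_cos, Complex.conj_ofReal, Complex.I_sq]
    ring_nf
    simp only [Complex.I_sq]
    ring
  refine ⟨key, fun hs => ?_⟩
  rw [key, key, hσz]
  have h1 : Matrix.trace (!![(1:ℂ), 0; 0, -1] * !![1, 0; 0, 0]) = 1 := by
    simp [Matrix.trace, Fin.sum_univ_two, Matrix.mul_apply]
  have h2 : Matrix.trace (!![(1:ℂ), 0; 0, -1] * !![0, 0; 0, 1]) = -1 := by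
    simp [Matrix.trace, Fin.sum_univ_two, Matrix.mul_apply]
  rw [h1, h2]
  have : ((Real.sin θ : ℂ)) ≠ 0 := by exact_mod_cast hs
  intro h
  apply this
  have h2 : ((Real.sin θ : ℂ)) ^ 2 = 0 := by linear_combination h / 2
  exact pow_eq_zero_iff (n := 2) (by norm_num) |>.mp h2
end

section
/- Let S be the swap matrix on ℂ^n ⊗ ℂ^n (entries S (i,j) (k,l) = 1 if i = l and j = k, else 0). Let Φ be a ℂ-linear map from n×n complex matrices to n×n complex matrices satisfying trace(Φ(X)) = trace(X) for all X, and let ρ, σ be n×n complex matrices with trace(σ) = 1. Then for every n×n complex matrix C: trace((C ⊗ₖ 1) * S * (Φ(σ) ⊗ₖ ρ) * S) = trace(C * ρ). (The system state after SWAP, an arbitrary trace-preserving intermediate operation Φ on the system, and a second SWAP, equals the initial system state ρ.) -/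
open scoped Matrix Kronecker

lemma swap_conj {n : ℕ} (A B : Matrix (Fin n) (Fin n) ℂ) :
    swapMatrix n * (A ⊗ₖ B) * swapMatrix n = B ⊗ₖ A := by
  ext p q
  simp only [Matrix.mul_apply, swapMatrix, Matrix.kroneckerMap_apply]
  rw [Fintype.sum_prod_type]
  simp [Fintype.sum_prod_type, ite_and, mul_comm]

/-- Non-Markovianity without correlations: the system state after SWAP, an arbitrary
trace-preserving linear intermediate operation `Φ`, and a second SWAP, equals the initial
system state `ρ` (in weak form against any system observable `C`). -/
theorem swap_swap_memory {n : ℕ}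
    (Φ : Matrix (Fin n) (Fin n) ℂ →ₗ[ℂ] Matrix (Fin n) (Fin n) ℂ)
    (hΦ : ∀ X, Matrix.trace (Φ X) = Matrix.trace X)
    (ρ σ : Matrix (Fin n) (Fin n) ℂ) (hσ : Matrix.trace σ = 1)
    (C : Matrix (Fin n) (Fin n) ℂ) :
    Matrix.trace ((C ⊗ₖ (1 : Matrix (Fin n) (Fin n) ℂ)) * swapMatrix n *
        ((Φ σ) ⊗ₖ ρ) * swapMatrix n) = Matrix.trace (C * ρ) := by
  have h : (C ⊗ₖ (1 : Matrix (Fin n) (Fin n) ℂ)) * swapMatrix n *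
      ((Φ σ) ⊗ₖ ρ) * swapMatrix n
      = (C ⊗ₖ (1 : Matrix (Fin n) (Fin n) ℂ)) * (ρ ⊗ₖ (Φ σ)) := by
    rw [mul_assoc, mul_assoc, ← mul_assoc (swapMatrix n), swap_conj]
  rw [h, ← Matrix.mul_kronecker_mul, Matrix.trace_kronecker, one_mul, hΦ, hσ, mul_one]
end

section
/- Let σx = !![0, 1; 1, 0] and σz = !![1, 0; 0, −1] (as 2×2 complex matrices), let X be any m×m complex matrix, and let t be real. Set H = σx ⊗ₖ X and V = σz ⊗ₖ 1. Then V * Matrix.exp((−(i·t)) • H) * V * Matrix.exp((−(i·t)) • H) = 1. -/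
open scoped Matrix Kronecker

namespace Matrix

section Exp

variable {n 𝕂 : Type*} [Fintype n] [DecidableEq n] [RCLike 𝕂]

/-- Conjugating by the involution `V` turns `exp H` into `exp (-H)`, the inverse of `exp H`. -/
theorem exp_echo_of_anticommute {V H : Matrix n n 𝕂} (hVV : V * V = 1) (hVHV : V * H * V = -H) :
    V * NormedSpace.exp H * V * NormedSpace.exp H = 1 := by
  have hV : IsUnit V := ⟨⟨V, V, hVV, hVV⟩, rfl⟩
  have hVinv : V⁻¹ = V := inv_eq_right_inv hVV
  have hconj : V * NormedSpace.exp H * V = NormedSpace.exp (-H) := by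
    simpa only [hVinv, hVHV] using (exp_conj V H hV).symm
  rw [hconj, ← exp_add_of_commute _ _ (Commute.refl H).neg_left, neg_add_cancel,
    NormedSpace.exp_zero]

end Exp

theorem neg_kronecker {l m n p R : Type*} [Ring R] (A : Matrix l m R) (B : Matrix n p R) :
    (-A) ⊗ₖ B = -(A ⊗ₖ B) := by
  simpa using smul_kronecker (-1 : R) A B

section Kronecker

variable {ι κ R : Type*} [Fintype ι] [DecidableEq κ] [Fintype κ] [CommRing R]

theorem kronecker_one_mul_self {A : Matrix ι ι R} [DecidableEq ι] (hA : A * A = 1) :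
    (A ⊗ₖ (1 : Matrix κ κ R)) * (A ⊗ₖ 1) = 1 := by
  rw [← mul_kronecker_mul, hA, one_mul, one_kronecker_one]

theorem kronecker_one_conj (V A : Matrix ι ι R) (X : Matrix κ κ R) :
    (V ⊗ₖ (1 : Matrix κ κ R)) * (A ⊗ₖ X) * (V ⊗ₖ 1) = (V * A * V) ⊗ₖ X := by
  rw [← mul_kronecker_mul, ← mul_kronecker_mul, one_mul, mul_one]

end Kronecker

end Matrix

theorem pauliZ_mul_pauliZ :
    (!![1, 0; 0, -1] : Matrix (Fin 2) (Fin 2) ℂ) * !![1, 0; 0, -1] = 1 := by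
  rw [Matrix.one_fin_two]
  norm_num [Matrix.mul_fin_two]

theorem pauliZ_conj_pauliX :
    (!![1, 0; 0, -1] : Matrix (Fin 2) (Fin 2) ℂ) * !![0, 1; 1, 0] * !![1, 0; 0, -1] =
      -!![0, 1; 1, 0] := by
  norm_num [Matrix.mul_fin_two]

/-- The echo identity for the dephasing example: with `H = σx ⊗ X` and `V = σz ⊗ 𝟙`,
applying `V`, evolving for the same time, applying `V` again and evolving once more
returns the identity. -/
theorem dephasing_echo {m : ℕ} (X : Matrix (Fin m) (Fin m) ℂ) (t : ℝ)
    (σx σz : Matrix (Fin 2) (Fin 2) ℂ)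
    (hσx : σx = !![0, 1; 1, 0]) (hσz : σz = !![1, 0; 0, -1])
    (H V : Matrix (Fin 2 × Fin m) (Fin 2 × Fin m) ℂ)
    (hH : H = σx ⊗ₖ X) (hV : V = σz ⊗ₖ (1 : Matrix (Fin m) (Fin m) ℂ)) :
    V * NormedSpace.exp ((-(Complex.I * (t : ℂ))) • H) * V *
        NormedSpace.exp ((-(Complex.I * (t : ℂ))) • H) = 1 := by
  subst hσx hσz hH hV
  apply Matrix.exp_echo_of_anticommute (Matrix.kronecker_one_mul_self pauliZ_mul_pauliZ)
  rw [Matrix.mul_smul, Matrix.smul_mul, Matrix.kronecker_one_conj, pauliZ_conj_pauliX,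
    Matrix.neg_kronecker, smul_neg]
end

section
/- Let μ be a probability measure on a product measurable space α × β with both factors standard Borel (or assume the relevant sigma-finiteness/measurability so that Mathlib's klDiv and marginals apply), and let μ₁ = μ.map Prod.fst and μ₂ = μ.map Prod.snd be its marginals. Then for all probability measures ν₁ on α and ν₂ on β: klDiv μ (μ₁.prod μ₂) ≤ klDiv μ (ν₁.prod ν₂). (The closest product measure to μ in Kullback–Leibler divergence is the product of its marginals.) -/
/-!
Write `μ₁`, `μ₂` for the marginals of `μ`. Disintegrating `μ = μ₁ ⊗ₘ κ`, the chain rule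
for the Kullback–Leibler divergence gives `KL(μ ‖ ν₁ ⊗ ν₂) = KL(μ₁ ‖ ν₁) + KL(μ ‖ μ₁ ⊗ ν₂)`,
and the same argument on the swapped coordinates gives
`KL(μ ‖ μ₁ ⊗ ν₂) = KL(μ₂ ‖ ν₂) + KL(μ ‖ μ₁ ⊗ μ₂)`. Hence the Pythagorean identity
`KL(μ ‖ ν₁ ⊗ ν₂) = KL(μ₁ ‖ ν₁) + KL(μ₂ ‖ ν₂) + KL(μ ‖ μ₁ ⊗ μ₂)`, whose first two terms
are nonnegative.
-/

open MeasureTheory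
open scoped Classical

/-- The Kullback–Leibler divergence of two measures, defined as the integral of the
log-likelihood ratio when `μ ≪ ν` and the ratio is integrable, and `⊤` otherwise. -/
noncomputable def klDiv {α : Type*} [MeasurableSpace α] (μ ν : Measure α) : EReal :=
  if μ ≪ ν ∧ Integrable (llr μ ν) μ then ((∫ x, llr μ ν x ∂μ : ℝ) : EReal) else ⊤

lemma klDiv_eq_coe_klDiv_of_measure_univ_eq {α : Type*} [MeasurableSpace α] {μ ν : Measure α}
    [IsFiniteMeasure μ] [IsFiniteMeasure ν] (h : μ Set.univ = ν Set.univ) :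
    klDiv μ ν = InformationTheory.klDiv μ ν := by
  have h_real : μ.real Set.univ = ν.real Set.univ := by simp [measureReal_def, h]
  by_cases hμν : μ ≪ ν ∧ Integrable (llr μ ν) μ
  · obtain ⟨hac, hint⟩ := hμν
    have h_nonneg : 0 ≤ ∫ x, llr μ ν x ∂μ := by
      simpa [h_real] using InformationTheory.integral_llr_add_sub_measure_univ_nonneg hac hint
    rw [klDiv, if_pos ⟨hac, hint⟩, InformationTheory.klDiv_of_ac_of_integrable hac hint, h_real,
      add_sub_cancel_right, EReal.coe_ennreal_ofReal, max_eq_left h_nonneg]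
  · rw [klDiv, if_neg hμν, InformationTheory.klDiv_eq_top_iff.mpr (not_and.mp hμν)]
    rfl

namespace InformationTheory

-- In this namespace `klDiv` is Mathlib's `ℝ≥0∞`-valued `InformationTheory.klDiv`.
variable {α β : Type*} [MeasurableSpace α] [MeasurableSpace β]

lemma klDiv_map_measurableEquiv (e : α ≃ᵐ β) (μ ν : Measure α) [IsFiniteMeasure μ]
    [IsFiniteMeasure ν] :
    klDiv (μ.map e) (ν.map e) = klDiv μ ν := by
  refine le_antisymm (klDiv_map_le μ ν e.measurable) ?_
  calc klDiv μ ν = klDiv ((μ.map e).map e.symm) ((ν.map e).map e.symm) := by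
        rw [e.map_symm_map, e.map_symm_map]
    _ ≤ klDiv (μ.map e) (ν.map e) := klDiv_map_le _ _ e.symm.measurable

lemma klDiv_prod_eq_klDiv_fst_add [StandardBorelSpace β] (μ : Measure (α × β)) [IsFiniteMeasure μ]
    (ν₁ : Measure α) (ν₂ : Measure β) [IsFiniteMeasure ν₁] [IsProbabilityMeasure ν₂] :
    klDiv μ (ν₁.prod ν₂) = klDiv μ.fst ν₁ + klDiv μ (μ.fst.prod ν₂) := by
  have : Nonempty β := nonempty_of_isProbabilityMeasure ν₂
  simpa only [Measure.disintegrate, Measure.compProd_const]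
    using klDiv_compProd_eq_add μ.fst ν₁ μ.condKernel (ProbabilityTheory.Kernel.const α ν₂)

lemma klDiv_prod_eq_klDiv_snd_add [StandardBorelSpace α] (μ : Measure (α × β)) [IsFiniteMeasure μ]
    (ν₁ : Measure α) (ν₂ : Measure β) [IsProbabilityMeasure ν₁] [IsFiniteMeasure ν₂] :
    klDiv μ (ν₁.prod ν₂) = klDiv μ.snd ν₂ + klDiv μ (ν₁.prod μ.snd) := by
  have h_swap : ⇑(MeasurableEquiv.prodComm : α × β ≃ᵐ β × α) = Prod.swap := rfl
  rw [← klDiv_map_measurableEquiv MeasurableEquiv.prodComm,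
    ← klDiv_map_measurableEquiv MeasurableEquiv.prodComm μ (ν₁.prod μ.snd), h_swap,
    Measure.prod_swap, Measure.prod_swap, klDiv_prod_eq_klDiv_fst_add, Measure.fst_map_swap]

lemma klDiv_prod_eq_add_klDiv_prod_fst_snd [StandardBorelSpace α] [StandardBorelSpace β]
    (μ : Measure (α × β)) [IsProbabilityMeasure μ]
    (ν₁ : Measure α) (ν₂ : Measure β) [IsFiniteMeasure ν₁] [IsProbabilityMeasure ν₂] :
    klDiv μ (ν₁.prod ν₂) = klDiv μ.fst ν₁ + klDiv μ.snd ν₂ + klDiv μ (μ.fst.prod μ.snd) := by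
  rw [klDiv_prod_eq_klDiv_fst_add, klDiv_prod_eq_klDiv_snd_add μ μ.fst, add_assoc]

lemma klDiv_prod_fst_snd_le [StandardBorelSpace α] [StandardBorelSpace β]
    (μ : Measure (α × β)) [IsProbabilityMeasure μ]
    (ν₁ : Measure α) (ν₂ : Measure β) [IsFiniteMeasure ν₁] [IsProbabilityMeasure ν₂] :
    klDiv μ (μ.fst.prod μ.snd) ≤ klDiv μ (ν₁.prod ν₂) := by
  rw [klDiv_prod_eq_add_klDiv_prod_fst_snd μ ν₁ ν₂]
  exact le_add_self

end InformationTheory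

/-- The closest product measure to `μ` in Kullback–Leibler divergence is the product of
its marginals. -/
theorem klDiv_prod_marginals_le {α β : Type*} [MeasurableSpace α] [MeasurableSpace β]
    [StandardBorelSpace α] [StandardBorelSpace β]
    (μ : Measure (α × β)) [IsProbabilityMeasure μ]
    (ν₁ : Measure α) (ν₂ : Measure β)
    [IsProbabilityMeasure ν₁] [IsProbabilityMeasure ν₂] :
    klDiv μ ((μ.map Prod.fst).prod (μ.map Prod.snd)) ≤ klDiv μ (ν₁.prod ν₂) := by
  change klDiv μ (μ.fst.prod μ.snd) ≤ _
  rw [klDiv_eq_coe_klDiv_of_measure_univ_eq (by simp),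
    klDiv_eq_coe_klDiv_of_measure_univ_eq (by simp)]
  exact EReal.coe_ennreal_le_coe_ennreal_iff.mpr (InformationTheory.klDiv_prod_fst_snd_le μ ν₁ ν₂)
end
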